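/- arXiv:1004.0151 — 6 statements merged into one kernel-verified Lean document; each statement's English description precedes it below -/
import Mathlib

section
/- For every complex number λ not lying in [0,∞), the limit as N → ∞ of ( ∫_{x ∈ ℝ³, ‖x‖ ≤ N} 1/(‖x‖² − λ) dx − 4πN ) exists and equals 2π² i √λ. -/
open MeasureTheory Filter

/-- The branch of the complex square root with positive imaginary part
(for `z ∉ [0,∞)`): `√z = i · (−z)^{1/2}` where `(−z)^{1/2}` is the principal root. -/
noncomputable def sqrtUpper (z : ℂ) : ℂ := Complex.I * (-z) ^ ((1 : ℂ) / 2)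

/-!
In polar coordinates the integral is `4π ∫₀ᴺ r² / (r² - a²) dr` with `a = √λ`. Since `a ∉ ℝ`,
the integrand has the antiderivative `r + (a / 2) (log (r - a) - log (r + a))` built from
the principal logarithm. This antiderivative minus `r` tends to `0` at infinity, while at
`r = 0` it equals `(a / 2) (log (-a) - log a) = -πia / 2` because `Im a > 0`. Hence the
integral minus `4πN` tends to `4π · πia / 2 = 2π²i√λ`.
-/

open Complex Metric Set Topology
open scoped ComplexOrder Real

theorem sqrtUpper_sq (z : ℂ) : sqrtUpper z ^ 2 = z := by
  rw [sqrtUpper, mul_pow, I_sq, one_div, ← Nat.cast_two (R := ℂ),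
    cpow_nat_inv_pow _ two_ne_zero]
  ring

theorem sqrtUpper_im_pos {z : ℂ} (hz : ¬0 ≤ z) : 0 < (sqrtUpper z).im := by
  have hslit : -z ∈ slitPlane := mem_slitPlane_iff_not_le_zero.2 (by rwa [neg_nonpos])
  have hre : 0 < ‖-z‖ + (-z).re := by
    rcases mem_slitPlane_iff.1 hslit with hpos | him
    · positivity
    · linarith [neg_abs_le (-z).re, abs_re_lt_norm.2 him]
  rw [sqrtUpper, mul_im, I_re, I_im, zero_mul, one_mul, zero_add, one_div,
    ← Nat.cast_two (R := ℂ), Nat.cast_ofNat, cpow_inv_two_re]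
  positivity

theorem not_nonneg_of_forall_ne_ofReal {z : ℂ} (hz : ∀ t : ℝ, 0 ≤ t → z ≠ t) : ¬0 ≤ z :=
  fun h ↦ hz z.re (nonneg_iff.1 h).1 (eq_re_of_ofReal_le (r := 0) (by simpa using h))

theorem tendsto_log_ofReal_add_sub_log (b : ℂ) :
    Tendsto (fun r : ℝ ↦ log (r + b) - log r) atTop (𝓝 0) := by
  have hinv : Tendsto (fun r : ℝ ↦ (r : ℂ)⁻¹) atTop (𝓝 0) :=
    tendsto_inv₀_cobounded.comp (RCLike.tendsto_ofReal_atTop_cobounded ℂ)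
  have hone : Tendsto (fun r : ℝ ↦ 1 + b * (r : ℂ)⁻¹) atTop (𝓝 1) := by
    simpa using (hinv.const_mul b).const_add 1
  have hlog : Tendsto (fun r : ℝ ↦ log (1 + b * (r : ℂ)⁻¹)) atTop (𝓝 0) := by
    simpa [Function.comp_def] using (continuousAt_clog one_mem_slitPlane).tendsto.comp hone
  refine hlog.congr' ?_
  filter_upwards [eventually_gt_atTop 0,
    hone.eventually (isOpen_slitPlane.mem_nhds one_mem_slitPlane)] with r hr hslit
  have hr' : (r : ℂ) ≠ 0 := ofReal_ne_zero.2 hr.ne'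
  rw [show (r : ℂ) + b = r * (1 + b * (r : ℂ)⁻¹) by field_simp,
    log_ofReal_mul hr (slitPlane_ne_zero hslit), ← ofReal_log hr.le]
  ring

noncomputable def radialPrimitive (a : ℂ) (r : ℝ) : ℂ :=
  r + a / 2 * (log (r - a) - log (r + a))

section RadialPrimitive

variable {a : ℂ}

theorem ofReal_sub_mem_slitPlane (ha : a.im ≠ 0) (r : ℝ) : (r : ℂ) - a ∈ slitPlane :=
  mem_slitPlane_iff.2 (Or.inr (by simpa using ha))

theorem ofReal_add_mem_slitPlane (ha : a.im ≠ 0) (r : ℝ) : (r : ℂ) + a ∈ slitPlane :=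
  mem_slitPlane_iff.2 (Or.inr (by simpa using ha))

theorem ofReal_sq_sub_sq_ne_zero (ha : a.im ≠ 0) (r : ℝ) : (r : ℂ) ^ 2 - a ^ 2 ≠ 0 := by
  rw [sq_sub_sq]
  exact mul_ne_zero (slitPlane_ne_zero (ofReal_add_mem_slitPlane ha r))
    (slitPlane_ne_zero (ofReal_sub_mem_slitPlane ha r))

theorem hasDerivAt_radialPrimitive (ha : a.im ≠ 0) (r : ℝ) :
    HasDerivAt (radialPrimitive a) ((r : ℂ) ^ 2 / ((r : ℂ) ^ 2 - a ^ 2)) r := by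
  have hsub := ofReal_sub_mem_slitPlane ha r
  have hadd := ofReal_add_mem_slitPlane ha r
  have hsub0 := slitPlane_ne_zero hsub
  have hadd0 := slitPlane_ne_zero hadd
  have hlogs : HasDerivAt (fun z : ℂ ↦ log (z - a) - log (z + a))
      (1 / ((r : ℂ) - a) - 1 / ((r : ℂ) + a)) r :=
    (((hasDerivAt_id' (r : ℂ)).sub_const a).clog hsub).sub
      (((hasDerivAt_id' (r : ℂ)).add_const a).clog hadd)
  refine (((hasDerivAt_id' (r : ℂ)).add (hlogs.const_mul (a / 2))).comp_ofReal).congr_deriv ?_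
  have := ofReal_sq_sub_sq_ne_zero ha r
  field_simp
  ring

theorem integral_sq_div_sq_sub_sq (ha : a.im ≠ 0) (R : ℝ) :
    ∫ r in (0 : ℝ)..R, (r : ℂ) ^ 2 / ((r : ℂ) ^ 2 - a ^ 2) =
      radialPrimitive a R - radialPrimitive a 0 := by
  refine intervalIntegral.integral_eq_sub_of_hasDerivAt
    (fun r _ ↦ hasDerivAt_radialPrimitive ha r) (Continuous.intervalIntegrable ?_ _ _)
  exact (by fun_prop : Continuous fun r : ℝ ↦ (r : ℂ) ^ 2).div (by fun_prop)
    (ofReal_sq_sub_sq_ne_zero ha)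

-- `log (-a) - log a = -πi` for `a` in the upper half-plane.
theorem radialPrimitive_zero (ha : 0 < a.im) : radialPrimitive a 0 = -(π * I * a / 2) := by
  rw [radialPrimitive, ofReal_zero, zero_sub, zero_add, zero_add, log, log,
    arg_neg_eq_arg_sub_pi_of_im_pos ha, norm_neg]
  push_cast
  ring

theorem tendsto_radialPrimitive_sub_self (a : ℂ) :
    Tendsto (fun r : ℝ ↦ radialPrimitive a r - r) atTop (𝓝 0) := by
  have h := ((tendsto_log_ofReal_add_sub_log (-a)).sub
    (tendsto_log_ofReal_add_sub_log a)).const_mul (a / 2)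
  rw [sub_zero, mul_zero] at h
  refine h.congr fun r ↦ ?_
  rw [radialPrimitive, ← sub_eq_add_neg]
  ring

end RadialPrimitive

section PolarCoordinates

variable {E F : Type*} [NormedAddCommGroup E] [NormedSpace ℝ E] [Nontrivial E]
  [FiniteDimensional ℝ E] [MeasurableSpace E] [BorelSpace E] [NormedAddCommGroup F]
  [NormedSpace ℝ F]

theorem setIntegral_closedBall_fun_norm (μ : Measure E) [μ.IsAddHaarMeasure] (f : ℝ → F)
    {R : ℝ} (hR : 0 ≤ R) :
    ∫ x in closedBall 0 R, f ‖x‖ ∂μ =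
      Module.finrank ℝ E • μ.real (ball 0 1) •
        ∫ r in (0 : ℝ)..R, r ^ (Module.finrank ℝ E - 1) • f r := by
  have hball : closedBall (0 : E) R = norm ⁻¹' Iic R := by
    ext x
    simp
  have hradial : ∫ x in closedBall 0 R, f ‖x‖ ∂μ = ∫ x, (Iic R).indicator f ‖x‖ ∂μ := by
    rw [← integral_indicator measurableSet_closedBall, hball]
    exact integral_congr_ae (.of_forall fun x ↦ indicator_comp_right (g := f) norm)
  rw [hradial, integral_fun_norm_addHaar μ, intervalIntegral.integral_of_le hR,
    ← Ioi_inter_Iic, ← setIntegral_indicator measurableSet_Iic]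
  simp_rw [indicator_smul_apply]

theorem setIntegral_closedBall_fun_norm_fin_three (f : ℝ → F) {R : ℝ} (hR : 0 ≤ R) :
    ∫ x in closedBall (0 : EuclideanSpace ℝ (Fin 3)) R, f ‖x‖ =
      (4 * π) • ∫ r in (0 : ℝ)..R, r ^ 2 • f r := by
  rw [setIntegral_closedBall_fun_norm volume f hR, finrank_euclideanSpace_fin, measureReal_def,
    EuclideanSpace.volume_ball_fin_three, ENNReal.ofReal_one, one_pow, one_mul,
    ENNReal.toReal_ofReal (by positivity), ← Nat.cast_smul_eq_nsmul ℝ, smul_smul]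
  norm_num
  ring_nf

end PolarCoordinates

theorem setIntegral_closedBall_inv_norm_sq_sub_sq {a : ℂ} (ha : a.im ≠ 0) {R : ℝ}
    (hR : 0 ≤ R) :
    ∫ x in closedBall (0 : EuclideanSpace ℝ (Fin 3)) R, ((‖x‖ : ℂ) ^ 2 - a ^ 2)⁻¹ =
      4 * π * (radialPrimitive a R - radialPrimitive a 0) := by
  rw [setIntegral_closedBall_fun_norm_fin_three (fun r : ℝ ↦ ((r : ℂ) ^ 2 - a ^ 2)⁻¹) hR]
  have hintegrand (r : ℝ) :
      r ^ 2 • ((r : ℂ) ^ 2 - a ^ 2)⁻¹ = (r : ℂ) ^ 2 / ((r : ℂ) ^ 2 - a ^ 2) := by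
    rw [real_smul, div_eq_mul_inv, ofReal_pow]
  simp_rw [hintegrand, integral_sq_div_sq_sub_sq ha, real_smul]
  push_cast
  ring

/-- For `λ ∉ [0,∞)`,
`∫_{‖x‖ ≤ N, x ∈ ℝ³} 1/(‖x‖² − λ) dx − 4πN  →  2π² i √λ` as `N → ∞`. -/
theorem stmt0 (lam : ℂ) (hlam : ∀ t : ℝ, 0 ≤ t → lam ≠ (t : ℂ)) :
    Tendsto (fun N : ℝ =>
        (∫ x in Metric.closedBall (0 : EuclideanSpace ℝ (Fin 3)) N,
          ((‖x‖ : ℂ) ^ 2 - lam)⁻¹) - 4 * (Real.pi : ℂ) * (N : ℂ))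
      atTop (nhds (2 * (Real.pi : ℂ) ^ 2 * Complex.I * sqrtUpper lam)) := by
  set a := sqrtUpper lam
  have ha : 0 < a.im := sqrtUpper_im_pos (not_nonneg_of_forall_ne_ofReal hlam)
  have hlam_eq : lam = a ^ 2 := (sqrtUpper_sq lam).symm
  rw [hlam_eq]
  have hlim := ((tendsto_radialPrimitive_sub_self a).const_mul (4 * π : ℂ)).sub_const
    (4 * π * radialPrimitive a 0)
  refine Tendsto.congr' ?_ (by convert hlim using 2; rw [radialPrimitive_zero ha]; ring)
  filter_upwards [eventually_ge_atTop 0] with N hN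
  rw [setIntegral_closedBall_inv_norm_sq_sub_sq ha.ne' hN]
  ring
end

section
/- For every complex number λ not lying in [0,∞), the limit as N → ∞ of ( ∫_{x ∈ ℝ², ‖x‖ ≤ N} 1/(‖x‖² − λ) dx − 2π log N ) exists and equals −π Log(−λ), where Log is the principal branch of the complex logarithm. -/
open MeasureTheory Filter Metric Set
open scoped Real Topology ComplexOrder

/-! Integrating in polar coordinates, the disc integral is `2π ∫₀ᴺ r / (r² - λ) dr`, and
`r ↦ Log (r² - λ) / 2` is an antiderivative because `r² - λ` never leaves the slit plane, where
`Log` is holomorphic. This gives `π (Log (N² - λ) - Log (-λ))`, and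
`Log (N² - λ) = 2 log N + Log (1 - λ / N²)` with `Log (1 - λ / N²) → Log 1 = 0`. -/

theorem integral_closedBall_fun_norm_fin_two {F : Type*} [NormedAddCommGroup F]
    [NormedSpace ℝ F] (f : ℝ → F) {N : ℝ} (hN : 0 ≤ N) :
    ∫ x in closedBall (0 : EuclideanSpace ℝ (Fin 2)) N, f ‖x‖
      = (2 * π) • ∫ r in 0..N, r • f r := by
  have hball : (closedBall (0 : EuclideanSpace ℝ (Fin 2)) N).indicator (fun x => f ‖x‖)
      = fun x => (Iic N).indicator f ‖x‖ := by
    ext x; simp [indicator]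
  have hsmul : (fun r : ℝ => r • (Iic N).indicator f r) = (Iic N).indicator (fun r => r • f r) :=
    funext fun r => (indicator_smul_apply (Iic N) id f r).symm
  rw [← integral_indicator measurableSet_closedBall, hball,
    integral_fun_norm_addHaar (volume : Measure (EuclideanSpace ℝ (Fin 2))) ((Iic N).indicator f)]
  simp only [finrank_euclideanSpace, Fintype.card_fin, measureReal_def,
    EuclideanSpace.volume_ball_fin_two, ENNReal.ofReal_one, one_pow, one_mul,
    ENNReal.toReal_ofReal Real.pi_nonneg, Nat.reduceSub, pow_one]
  rw [hsmul, integral_indicator measurableSet_Iic, Measure.restrict_restrict measurableSet_Iic,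
    Iic_inter_Ioi, intervalIntegral.integral_of_le hN, mul_smul]
  exact (ofNat_smul_eq_nsmul ℝ 2 _).symm

namespace Complex

lemma neg_mem_slitPlane_of_forall_ne_ofReal {w : ℂ} (hw : ∀ t : ℝ, 0 ≤ t → w ≠ t) :
    -w ∈ slitPlane := by
  rw [mem_slitPlane_iff_not_le_zero, neg_nonpos]
  intro h
  exact hw w.re (nonneg_iff.1 h).1 (eq_re_of_ofReal_le (r := 0) (by simpa using h))

lemma ofReal_add_mem_slitPlane {z : ℂ} (hz : z ∈ slitPlane) {t : ℝ} (ht : 0 ≤ t) :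
    (t : ℂ) + z ∈ slitPlane := by
  rw [mem_slitPlane_iff] at hz ⊢
  simp only [add_re, ofReal_re, add_im, ofReal_im, zero_add]
  exact hz.imp (fun h => by linarith) id

lemma sq_sub_mem_slitPlane {w : ℂ} (hw : -w ∈ slitPlane) (r : ℝ) :
    (r : ℂ) ^ 2 - w ∈ slitPlane := by
  simpa [sub_eq_add_neg] using ofReal_add_mem_slitPlane hw (sq_nonneg r)

lemma intervalIntegral_smul_inv_sq_sub {w : ℂ} (hw : -w ∈ slitPlane) (N : ℝ) :
    ∫ r in (0 : ℝ)..N, r • ((r : ℂ) ^ 2 - w)⁻¹ = (log ((N : ℂ) ^ 2 - w) - log (-w)) / 2 := by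
  have hderiv (r : ℝ) :
      HasDerivAt (fun r : ℝ => log ((r : ℂ) ^ 2 - w) / 2) (r • ((r : ℂ) ^ 2 - w)⁻¹) r := by
    have hsq : HasDerivAt (fun z : ℂ => z ^ 2 - w) (2 * r) r := by
      simpa using (hasDerivAt_pow 2 (r : ℂ)).sub_const w
    refine (((hasDerivAt_log (sq_sub_mem_slitPlane hw r)).comp (r : ℂ) hsq).comp_ofReal.div_const
      2).congr_deriv ?_
    rw [real_smul]
    field_simp
  have hcont : Continuous fun r : ℝ => r • ((r : ℂ) ^ 2 - w)⁻¹ :=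
    continuous_id.smul (((continuous_ofReal.pow 2).sub continuous_const).inv₀
      fun r => slitPlane_ne_zero (sq_sub_mem_slitPlane hw r))
  rw [intervalIntegral.integral_eq_sub_of_hasDerivAt (fun r _ => hderiv r)
    (hcont.intervalIntegrable 0 N)]
  simp [sub_div]

lemma log_sq_sub_eq {w : ℂ} (hw : -w ∈ slitPlane) {N : ℝ} (hN : 0 < N) :
    log ((N : ℂ) ^ 2 - w) = 2 * Real.log N + log (1 - w / (N : ℂ) ^ 2) := by
  have hfac : (N : ℂ) ^ 2 - w = ((N ^ 2 : ℝ) : ℂ) * (1 - w / (N : ℂ) ^ 2) := by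
    push_cast
    field_simp
  rw [hfac, log_ofReal_mul (by positivity), Real.log_pow]
  · push_cast; ring
  · exact right_ne_zero_of_mul (hfac ▸ slitPlane_ne_zero (sq_sub_mem_slitPlane hw N))

end Complex

/-- For `λ ∉ [0,∞)`,
`∫_{‖x‖ ≤ N, x ∈ ℝ²} 1/(‖x‖² − λ) dx − 2π log N  →  −π Log(−λ)` as `N → ∞`,
where `Log` is the principal branch of the complex logarithm. -/
theorem stmt1 (lam : ℂ) (hlam : ∀ t : ℝ, 0 ≤ t → lam ≠ (t : ℂ)) :
    Tendsto (fun N : ℝ =>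
        (∫ x in Metric.closedBall (0 : EuclideanSpace ℝ (Fin 2)) N,
          ((‖x‖ : ℂ) ^ 2 - lam)⁻¹) - 2 * (Real.pi : ℂ) * (Real.log N : ℂ))
      atTop (nhds (-(Real.pi : ℂ) * Complex.log (-lam))) := by
  open Complex in
  have hlam' := neg_mem_slitPlane_of_forall_ne_ofReal hlam
  have heq : ∀ᶠ N : ℝ in atTop,
      π * log (1 - lam / (N : ℂ) ^ 2) + -π * log (-lam) =
        (∫ x in closedBall (0 : EuclideanSpace ℝ (Fin 2)) N, ((‖x‖ : ℂ) ^ 2 - lam)⁻¹)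
          - 2 * π * Real.log N := by
    filter_upwards [eventually_gt_atTop 0] with N hN
    rw [integral_closedBall_fun_norm_fin_two (fun r => ((r : ℂ) ^ 2 - lam)⁻¹) hN.le,
      intervalIntegral_smul_inv_sq_sub hlam', log_sq_sub_eq hlam' hN, real_smul]
    push_cast
    ring
  have hlim : Tendsto (fun N : ℝ => lam / (N : ℂ) ^ 2) atTop (𝓝 0) := by
    rw [tendsto_zero_iff_norm_tendsto_zero]
    simp only [norm_div, norm_pow, norm_real, Real.norm_eq_abs, sq_abs]
    exact tendsto_const_nhds.div_atTop (tendsto_pow_atTop two_ne_zero)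
  refine Tendsto.congr' heq ?_
  simpa using (((hlim.const_sub 1).clog (by simp)).const_mul (π : ℂ)).add_const (-π * log (-lam))
end

section
/- Let a ∈ ℝ³ and let Q̇ be the densely defined unbounded operator on L²(ℝ³) with domain { f ∈ L²(ℝ³) : (x ↦ ‖x‖² f(x)) ∈ L²(ℝ³) and ∫_{ℝ³} e^{−i⟨a,x⟩} f(x) dx = 0 } (every f with f, ‖x‖²f ∈ L²(ℝ³) is integrable, so the constraint makes sense), acting by (Q̇ f)(x) = ‖x‖² f(x). Then for u ∈ L²(ℝ³) and either sign ±: u belongs to the domain of the adjoint Q̇* and satisfies Q̇* u = ± i u if and only if u is almost everywhere equal to a scalar multiple of ψ_±(x) = e^{i⟨a,x⟩}/(‖x‖² ∓ i). In particular both deficiency spaces ker(Q̇* ∓ i) are one-dimensional. -/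
open MeasureTheory

/-!
The relation `⟪Q̇ f, u⟫ = ⟪f, z u⟫` on `dom Q̇` says that the antilinear functional
`f ↦ ⟪f, (‖x‖² - z) u⟫` vanishes on the kernel of `Λ f = ∫ e^{-i⟨a,x⟩} f`. Since `Λ` is nonzero on
the domain without the constraint, the first functional is a multiple of `Λ` there, i.e.
`⟪f, (‖x‖² - z) u - K e^{i⟨a,x⟩}⟫ = 0` for some `K` and all such `f`. Testing against truncations
of this function to balls gives `(‖x‖² - z) u = K e^{i⟨a,x⟩}` a.e., and dividing by `‖x‖² - z`,
which vanishes only on a null set, gives `u = K ψ`. Conversely, for `u = c ψ` the functional is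
`c · conj (Λ f)`, which vanishes on `dom Q̇`.
-/

open Metric Complex
open scoped ComplexConjugate RealInnerProductSpace ENNReal

lemma integrable_conj_mul {X : Type*} [MeasurableSpace X] {μ : Measure X} {f g : X → ℂ}
    (hf : MemLp f 2 μ) (hg : MemLp g 2 μ) : Integrable (fun x => conj (f x) * g x) μ :=
  hf.star.integrable_mul hg

lemma conj_mul_sq_norm_sub_mul (r : ℝ) (w v z : ℂ) :
    conj w * (((r : ℂ) ^ 2 - z) * v) = conj ((r : ℂ) ^ 2 * w) * v - conj w * (z * v) := by
  simp only [map_mul, map_pow, conj_ofReal]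
  ring

lemma ae_mul_eq_iff_ae_eq_div {X : Type*} [MeasurableSpace X] {μ : Measure X} {p u e : X → ℂ}
    (hp : ∀ᵐ x ∂μ, p x ≠ 0) (c : ℂ) :
    (fun x => p x * u x) =ᵐ[μ] (fun x => c * e x) ↔ u =ᵐ[μ] fun x => c * (e x / p x) := by
  constructor <;> intro h <;> filter_upwards [h, hp] with x hx hpx
  · rw [← mul_div_assoc, eq_div_iff hpx, ← hx, mul_comm]
  · rw [hx]
    field_simp

lemma Continuous.memLp_restrict_ball {Y E : Type*} [PseudoMetricSpace Y] [ProperSpace Y]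
    [MeasurableSpace Y] [OpensMeasurableSpace Y] {μ : Measure Y} [IsFiniteMeasureOnCompacts μ]
    [NormedAddCommGroup E] {h : Y → E} (hh : Continuous h) (p : ℝ≥0∞) (c : Y) (R : ℝ) :
    MemLp h p (μ.restrict (ball c R)) := by
  obtain ⟨C, hC⟩ := (isCompact_closedBall c R).exists_bound_of_continuousOn hh.continuousOn
  have : IsFiniteMeasure (μ.restrict (ball c R)) :=
    isFiniteMeasure_restrict.2 measure_ball_lt_top.ne
  refine (memLp_top_of_bound hh.aestronglyMeasurable C ?_).mono_exponent le_top
  exact (ae_restrict_iff' measurableSet_ball).2 <|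
    .of_forall fun x hx => hC x (ball_subset_closedBall hx)

section PlaneWave

variable {V : Type*} [NormedAddCommGroup V] [InnerProductSpace ℝ V]

lemma conj_planeWave (a x : V) : conj (cexp (-(I * ⟪a, x⟫))) = cexp (I * ⟪a, x⟫) := by
  simp [← exp_conj]

variable [MeasurableSpace V] (μ : Measure V) (a : V)

/-- The domain of `Q̇` is cut out of `MemPreDomain μ a` by the condition
`planeWaveCoeff μ a f = 0`. -/
structure MemPreDomain (f : V → ℂ) : Prop where
  memLp : MemLp f 2 μ
  memLp_sq_norm_mul : MemLp (fun x => (‖x‖ : ℂ) ^ 2 * f x) 2 μ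
  integrable_planeWave_mul : Integrable (fun x => cexp (-(I * ⟪a, x⟫)) * f x) μ

noncomputable def planeWaveCoeff (f : V → ℂ) : ℂ :=
  ∫ x, cexp (-(I * ⟪a, x⟫)) * f x ∂μ

/-- `u ∈ dom Q̇*` and `Q̇* u = z u`: `⟪Q̇ f, u⟫ = ⟪f, z u⟫` for every `f ∈ dom Q̇`. -/
def MemAdjointEigenspace (z : ℂ) (u : V → ℂ) : Prop :=
  ∀ f, MemPreDomain μ a f → planeWaveCoeff μ a f = 0 →
    ∫ x, conj ((‖x‖ : ℂ) ^ 2 * f x) * u x ∂μ = ∫ x, conj (f x) * (z * u x) ∂μ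

variable {μ a} {z : ℂ} {f g u : V → ℂ}

lemma MemPreDomain.sub_const_mul (hf : MemPreDomain μ a f) (hg : MemPreDomain μ a g) (c : ℂ) :
    MemPreDomain μ a (fun x => f x - c * g x) where
  memLp := hf.memLp.sub (hg.memLp.const_mul c)
  memLp_sq_norm_mul := by
    convert hf.memLp_sq_norm_mul.sub (hg.memLp_sq_norm_mul.const_mul c) using 1
    ext x; simp only [Pi.sub_apply]; ring
  integrable_planeWave_mul := by
    convert hf.integrable_planeWave_mul.sub (hg.integrable_planeWave_mul.const_mul c) using 1
    ext x; simp only [Pi.sub_apply]; ring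

lemma planeWaveCoeff_sub_const_mul (hf : MemPreDomain μ a f) (hg : MemPreDomain μ a g) (c : ℂ) :
    planeWaveCoeff μ a (fun x => f x - c * g x) =
      planeWaveCoeff μ a f - c * planeWaveCoeff μ a g := by
  simp only [planeWaveCoeff, mul_sub, mul_left_comm _ c]
  rw [integral_sub hf.integrable_planeWave_mul (hg.integrable_planeWave_mul.const_mul c),
    integral_const_mul]

lemma integral_conj_mul_planeWave (f : V → ℂ) :
    ∫ x, conj (f x) * cexp (I * ⟪a, x⟫) ∂μ = conj (planeWaveCoeff μ a f) := by
  simp only [planeWaveCoeff, ← integral_conj, map_mul, conj_planeWave, mul_comm]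

lemma MemPreDomain.integrable_conj_mul_planeWave (hf : MemPreDomain μ a f) :
    Integrable (fun x => conj (f x) * cexp (I * ⟪a, x⟫)) μ := by
  refine (conjCLE.toContinuousLinearMap.integrable_comp hf.integrable_planeWave_mul).congr <|
    .of_forall fun x => ?_
  simp only [ContinuousLinearEquiv.coe_coe, conjCLE_apply]
  rw [map_mul, conj_planeWave, mul_comm]

lemma integrable_conj_mul_sq_norm_sub_mul (hf : MemPreDomain μ a f) (hu : MemLp u 2 μ) (z : ℂ) :
    Integrable (fun x => conj (f x) * (((‖x‖ : ℂ) ^ 2 - z) * u x)) μ := by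
  simp only [conj_mul_sq_norm_sub_mul]
  exact (integrable_conj_mul hf.memLp_sq_norm_mul hu).sub
    (integrable_conj_mul hf.memLp (hu.const_mul z))

lemma integral_conj_mul_sq_norm_sub_mul (hf : MemPreDomain μ a f) (hu : MemLp u 2 μ) (z : ℂ) :
    ∫ x, conj (f x) * (((‖x‖ : ℂ) ^ 2 - z) * u x) ∂μ =
      ∫ x, conj ((‖x‖ : ℂ) ^ 2 * f x) * u x ∂μ - ∫ x, conj (f x) * (z * u x) ∂μ := by
  simp only [conj_mul_sq_norm_sub_mul]
  exact integral_sub (integrable_conj_mul hf.memLp_sq_norm_mul hu)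
    (integrable_conj_mul hf.memLp (hu.const_mul z))

lemma memAdjointEigenspace_iff_forall_integral_eq_zero (hu : MemLp u 2 μ) :
    MemAdjointEigenspace μ a z u ↔ ∀ f, MemPreDomain μ a f → planeWaveCoeff μ a f = 0 →
      ∫ x, conj (f x) * (((‖x‖ : ℂ) ^ 2 - z) * u x) ∂μ = 0 :=
  forall₂_congr fun _ hf => imp_congr_right fun _ => by
    rw [integral_conj_mul_sq_norm_sub_mul hf hu, sub_eq_zero]

variable [BorelSpace V] [ProperSpace V] [IsFiniteMeasureOnCompacts μ]

lemma memPreDomain_indicator_ball {R : ℝ} (hf : MemLp f 2 (μ.restrict (ball 0 R))) :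
    MemPreDomain μ a ((ball 0 R).indicator f) := by
  have hmul (h : V → ℂ) :
      (fun x => h x * (ball 0 R).indicator f x) = (ball 0 R).indicator (fun x => h x * f x) :=
    funext fun x => (Set.indicator_mul_right _ h f).symm
  have : IsFiniteMeasure (μ.restrict (ball 0 R)) :=
    isFiniteMeasure_restrict.2 measure_ball_lt_top.ne
  refine ⟨(memLp_indicator_iff_restrict measurableSet_ball).2 hf, ?_, ?_⟩
  · rw [hmul]
    exact (memLp_indicator_iff_restrict measurableSet_ball).2 <|
      hf.mul' ((by fun_prop : Continuous fun x : V => (‖x‖ : ℂ) ^ 2).memLp_restrict_ball ⊤ 0 R)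
  · rw [hmul]
    refine (integrable_indicator_iff measurableSet_ball).2 <| MemLp.integrable one_le_two <|
      hf.mul' ((by fun_prop : Continuous fun x : V => cexp (-(I * ⟪a, x⟫))).memLp_restrict_ball
        ⊤ 0 R)

lemma exists_memPreDomain_planeWaveCoeff_ne_zero [μ.IsOpenPosMeasure] (a : V) :
    ∃ φ, MemPreDomain μ a φ ∧ planeWaveCoeff μ a φ ≠ 0 := by
  refine ⟨(ball 0 1).indicator fun x => cexp (I * ⟪a, x⟫), memPreDomain_indicator_ball <|
    (by fun_prop : Continuous fun x : V => cexp (I * ⟪a, x⟫)).memLp_restrict_ball 2 0 1, ?_⟩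
  have hcoeff : planeWaveCoeff μ a ((ball 0 1).indicator fun x => cexp (I * ⟪a, x⟫)) =
      μ.real (ball 0 1) := by
    have hpt (x : V) :
        cexp (-(I * ⟪a, x⟫)) * (ball 0 1).indicator (fun x => cexp (I * ⟪a, x⟫)) x =
          (ball 0 1).indicator (fun _ => (1 : ℂ)) x := by
      by_cases hx : x ∈ ball 0 1 <;> simp [hx, ← exp_add]
    simp_rw [planeWaveCoeff, hpt, integral_indicator_const _ measurableSet_ball, real_smul,
      mul_one]
  rw [hcoeff, ofReal_ne_zero, measureReal_def]
  exact (ENNReal.toReal_pos (measure_ball_pos μ 0 one_pos).ne' measure_ball_lt_top.ne).ne'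

lemma exists_forall_integral_conj_mul_eq_conj_planeWaveCoeff_mul [μ.IsOpenPosMeasure]
    {v : V → ℂ}
    (hv : ∀ f, MemPreDomain μ a f → Integrable (fun x => conj (f x) * v x) μ)
    (h : ∀ f, MemPreDomain μ a f → planeWaveCoeff μ a f = 0 → ∫ x, conj (f x) * v x ∂μ = 0) :
    ∃ K : ℂ, ∀ f, MemPreDomain μ a f →
      ∫ x, conj (f x) * v x ∂μ = conj (planeWaveCoeff μ a f) * K := by
  obtain ⟨φ, hφ, hφ0⟩ := exists_memPreDomain_planeWaveCoeff_ne_zero (μ := μ) a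
  refine ⟨(∫ x, conj (φ x) * v x ∂μ) / conj (planeWaveCoeff μ a φ), fun f hf => ?_⟩
  set c := planeWaveCoeff μ a f / planeWaveCoeff μ a φ
  have hc : planeWaveCoeff μ a (fun x => f x - c * φ x) = 0 := by
    rw [planeWaveCoeff_sub_const_mul hf hφ, div_mul_cancel₀ _ hφ0, sub_self]
  have hker := h _ (hf.sub_const_mul hφ c) hc
  simp only [map_sub, map_mul, sub_mul, mul_assoc] at hker
  rw [integral_sub (hv f hf) ((hv φ hφ).const_mul _), integral_const_mul, sub_eq_zero] at hker
  rw [hker, map_div₀]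
  field_simp

lemma ae_eq_zero_of_forall_integral_conj_mul_eq_zero {w : V → ℂ}
    (hw : ∀ R, MemLp w 2 (μ.restrict (ball 0 R)))
    (h : ∀ f, MemPreDomain μ a f → ∫ x, conj (f x) * w x ∂μ = 0) : w =ᵐ[μ] 0 := by
  suffices hball : ∀ n : ℕ, ∀ᵐ x ∂μ.restrict (ball 0 n), w x = 0 by
    have := (ae_restrict_iUnion_iff _ _).2 hball
    rwa [iUnion_ball_nat, Measure.restrict_univ] at this
  intro n
  set g := (ball (0 : V) n).indicator w
  have hg : MemPreDomain μ a g := memPreDomain_indicator_ball (hw n)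
  have hconj (x : V) : conj (g x) * w x = ((‖g x‖ ^ 2 : ℝ) : ℂ) := by
    by_cases hx : x ∈ ball (0 : V) n <;> simp [g, hx, conj_mul']
  have hint : ∫ x, ‖g x‖ ^ 2 ∂μ = 0 := by
    have := h g hg
    rwa [integral_congr_ae (.of_forall hconj), integral_complex_ofReal, ofReal_eq_zero] at this
  have hg0 : g =ᵐ[μ] 0 := by
    have hsq := (memLp_two_iff_integrable_sq_norm hg.memLp.aestronglyMeasurable).1 hg.memLp
    filter_upwards [(integral_eq_zero_iff_of_nonneg (fun x => by positivity) hsq).1 hint]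
      with x hx
    simpa using hx
  rw [ae_restrict_iff' measurableSet_ball]
  filter_upwards [hg0] with x hx hxB
  simpa [g, hxB] using hx

theorem memAdjointEigenspace_iff_exists_ae_eq [μ.IsOpenPosMeasure] (hu : MemLp u 2 μ) :
    MemAdjointEigenspace μ a z u ↔ ∃ c : ℂ,
      (fun x => ((‖x‖ : ℂ) ^ 2 - z) * u x) =ᵐ[μ] fun x => c * cexp (I * ⟪a, x⟫) := by
  rw [memAdjointEigenspace_iff_forall_integral_eq_zero hu]
  constructor
  · intro H
    obtain ⟨K, hK⟩ := exists_forall_integral_conj_mul_eq_conj_planeWaveCoeff_mul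
      (fun f hf => integrable_conj_mul_sq_norm_sub_mul hf hu z) H
    refine ⟨K, Filter.eventuallyEq_iff_sub.2 <|
      ae_eq_zero_of_forall_integral_conj_mul_eq_zero (a := a) (fun R => ?_) fun f hf => ?_⟩
    · exact ((hu.restrict _).mul' ((by fun_prop : Continuous fun x : V => (‖x‖ : ℂ) ^ 2 - z)
        |>.memLp_restrict_ball ⊤ 0 R)).sub (((by fun_prop : Continuous fun x : V =>
          cexp (I * ⟪a, x⟫)).memLp_restrict_ball 2 0 R).const_mul K)
    · simp only [Pi.sub_apply, mul_sub, mul_left_comm _ K]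
      rw [integral_sub (integrable_conj_mul_sq_norm_sub_mul hf hu z)
        (hf.integrable_conj_mul_planeWave.const_mul K), integral_const_mul,
        integral_conj_mul_planeWave, hK f hf, mul_comm, sub_self]
  · rintro ⟨c, hc⟩ f hf hf0
    calc ∫ x, conj (f x) * (((‖x‖ : ℂ) ^ 2 - z) * u x) ∂μ
        = ∫ x, c * (conj (f x) * cexp (I * ⟪a, x⟫)) ∂μ :=
          integral_congr_ae <| by filter_upwards [hc] with x hx; rw [hx, mul_left_comm]
      _ = 0 := by rw [integral_const_mul, integral_conj_mul_planeWave, hf0, map_zero, mul_zero]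

theorem memAdjointEigenspace_iff [μ.IsOpenPosMeasure] (hu : MemLp u 2 μ)
    (hz : ∀ᵐ x ∂μ, (‖x‖ : ℂ) ^ 2 - z ≠ 0) :
    MemAdjointEigenspace μ a z u ↔
      ∃ c : ℂ, u =ᵐ[μ] fun x => c * (cexp (I * ⟪a, x⟫) / ((‖x‖ : ℂ) ^ 2 - z)) :=
  (memAdjointEigenspace_iff_exists_ae_eq hu).trans <|
    exists_congr fun c => ae_mul_eq_iff_ae_eq_div hz c

end PlaneWave

theorem stmt11_general (a : EuclideanSpace ℝ (Fin 3)) (σ : ℝ)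
    (u : EuclideanSpace ℝ (Fin 3) → ℂ) (hu : MemLp u 2 volume) :
    (∀ f : EuclideanSpace ℝ (Fin 3) → ℂ,
        MemLp f 2 volume →
        MemLp (fun x => ((‖x‖ : ℂ) ^ 2) * f x) 2 volume →
        Integrable (fun x => Complex.exp (-(Complex.I * ((inner ℝ a x : ℝ) : ℂ))) * f x) →
        (∫ x, Complex.exp (-(Complex.I * ((inner ℝ a x : ℝ) : ℂ))) * f x) = 0 →
        (∫ x, (starRingEnd ℂ) (((‖x‖ : ℂ) ^ 2) * f x) * u x)
          = ∫ x, (starRingEnd ℂ) (f x) * ((σ : ℂ) * Complex.I * u x))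
    ↔ ∃ c : ℂ, u =ᵐ[volume] fun x =>
        c * (Complex.exp (Complex.I * ((inner ℝ a x : ℝ) : ℂ)) /
          ((‖x‖ : ℂ) ^ 2 - (σ : ℂ) * Complex.I)) := by
  have hz : ∀ᵐ x ∂(volume : Measure (EuclideanSpace ℝ (Fin 3))),
      (‖x‖ : ℂ) ^ 2 - σ * I ≠ 0 := by
    filter_upwards [volume.ae_ne 0] with x hx h
    have : ‖x‖ ^ 2 = 0 := by simpa [← ofReal_pow] using congrArg re h
    simp_all
  rw [← memAdjointEigenspace_iff (a := a) hu hz]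
  exact ⟨fun H f hf => H f hf.1 hf.2 hf.3, fun H f h₁ h₂ h₃ => H f ⟨h₁, h₂, h₃⟩⟩

/-- Let `Q̇` be the multiplication operator `f ↦ ‖x‖² f` on `L²(ℝ³)` with domain
`{f ∈ L² : ‖x‖² f ∈ L², ∫ e^{−i⟨a,x⟩} f = 0}`.  For `u ∈ L²(ℝ³)` and either sign
`σ = ±1`:  `u` belongs to the domain of the adjoint `Q̇*` with `Q̇* u = σ i u`
(expressed via the defining property of the adjoint: `⟪Q̇ f, u⟫ = ⟪f, σ i u⟫` for
all `f` in the domain of `Q̇`) if and only if `u` is a.e. a scalar multiple of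
`ψ_σ(x) = e^{i⟨a,x⟩}/(‖x‖² − σ i)`.  In particular both deficiency spaces of `Q̇`
are one-dimensional. -/
theorem stmt11 (a : EuclideanSpace ℝ (Fin 3)) (σ : ℝ) (hσ : σ = 1 ∨ σ = -1)
    (u : EuclideanSpace ℝ (Fin 3) → ℂ) (hu : MemLp u 2 volume) :
    (∀ f : EuclideanSpace ℝ (Fin 3) → ℂ,
        MemLp f 2 volume →
        MemLp (fun x => ((‖x‖ : ℂ) ^ 2) * f x) 2 volume →
        Integrable (fun x => Complex.exp (-(Complex.I * ((inner ℝ a x : ℝ) : ℂ))) * f x) →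
        (∫ x, Complex.exp (-(Complex.I * ((inner ℝ a x : ℝ) : ℂ))) * f x) = 0 →
        (∫ x, (starRingEnd ℂ) (((‖x‖ : ℂ) ^ 2) * f x) * u x)
          = ∫ x, (starRingEnd ℂ) (f x) * ((σ : ℂ) * Complex.I * u x))
    ↔ ∃ c : ℂ, u =ᵐ[volume] fun x =>
        c * (Complex.exp (Complex.I * ((inner ℝ a x : ℝ) : ℂ)) /
          ((‖x‖ : ℂ) ^ 2 - (σ : ℂ) * Complex.I)) :=
  stmt11_general a σ u hu
end

section
/- Let a > 0 and b > 0 be real. Then for every real λ, b − i·s(λ) + e^{2ia·s(λ)}/(2a) ≠ 0, where s(λ) = √λ (the nonnegative real root) if λ ≥ 0 and s(λ) = i√(−λ) if λ < 0. Equivalently, the perturbed Laplacian on the half space ℍ³ with delta interaction of coupling g_R > 0 at distance a from the boundary (for which b = 2/(π² g_R)) has no real eigenvalue: the eigenvalue equation 1/g_R − (π²/2) i √λ + (π²/(4a)) e^{2ia√λ} = 0 has no real solution λ. -/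
/-!
For `λ < 0` the expression is the positive real number `b + u + e^{-2au}/(2a)` with `u = √(-λ)`.
For `λ ≥ 0` its imaginary part is `sin (2at)/(2a) - t` with `t = √λ`, which vanishes only when
`sin (2at) = 2at`, i.e. `t = 0`; the real part is then `b + 1/(2a) > 0`.
-/

open Complex

lemma im_sub_I_mul_add_exp_div (a b t : ℝ) :
    ((b : ℂ) - I * t + exp (2 * I * a * t) / (2 * a)).im = Real.sin (2 * a * t) / (2 * a) - t := by
  have harg : 2 * I * (a : ℂ) * t = ((2 * a * t : ℝ) : ℂ) * I := by push_cast; ring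
  rw [harg, exp_mul_I, ← ofReal_cos, ← ofReal_sin,
    show (2 * (a : ℂ)) = ((2 * a : ℝ) : ℂ) by push_cast; ring]
  simp only [sub_im, add_im, ofReal_im, mul_im, I_re, I_im, ofReal_re, div_ofReal_im]
  ring

lemma sub_I_mul_add_exp_div_ne_zero_of_nonneg {a b t : ℝ} (ha : 0 < a) (hb : 0 < b) (ht : 0 ≤ t) :
    (b : ℂ) - I * t + exp (2 * I * a * t) / (2 * a) ≠ 0 := by
  intro h
  have hsin : Real.sin (2 * a * t) = 2 * a * t := by
    have him := im_sub_I_mul_add_exp_div a b t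
    rw [h, zero_im] at him
    field_simp at him
    linarith
  have ht0 : t = 0 := by
    by_contra ht0
    have := Real.sin_lt (by positivity : 0 < 2 * a * t)
    linarith
  subst ht0
  have hpos : (0 : ℝ) < b + 1 / (2 * a) := by positivity
  apply hpos.ne'
  exact_mod_cast (by simpa using h : (b : ℂ) + 1 / (2 * a) = 0)

lemma sub_I_mul_add_exp_div_ne_zero_of_imaginary {a b u : ℝ} (ha : 0 < a) (hb : 0 < b)
    (hu : 0 ≤ u) :
    (b : ℂ) - I * (I * u) + exp (2 * I * a * (I * u)) / (2 * a) ≠ 0 := by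
  have hreal : (b : ℂ) - I * (I * u) + exp (2 * I * a * (I * u)) / (2 * a)
      = ((b + u + Real.exp (-(2 * a * u)) / (2 * a) : ℝ) : ℂ) := by
    have harg : 2 * I * (a : ℂ) * (I * u) = ((-(2 * a * u) : ℝ) : ℂ) := by
      push_cast
      linear_combination (2 * a * u : ℂ) * I_mul_I
    rw [harg, ← ofReal_exp]
    push_cast
    linear_combination (-(u : ℂ)) * I_mul_I
  rw [hreal]
  exact_mod_cast (by positivity : (0 : ℝ) < b + u + Real.exp (-(2 * a * u)) / (2 * a)).ne'

/-- For real `a > 0`, `b > 0` and any real `λ`, with `s(λ) = √λ` for `λ ≥ 0` and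
`s(λ) = i√(−λ)` for `λ < 0`, one has `b − i·s(λ) + e^{2ia·s(λ)}/(2a) ≠ 0`.
(Equivalently, the delta-perturbed Laplacian on the half space `ℍ³` with coupling
`g_R > 0`, `b = 2/(π² g_R)`, has no real eigenvalue.) -/
theorem stmt12 (a b : ℝ) (ha : 0 < a) (hb : 0 < b) (lam : ℝ) (s : ℂ)
    (hs : s = if 0 ≤ lam then ((Real.sqrt lam : ℝ) : ℂ)
      else Complex.I * ((Real.sqrt (-lam) : ℝ) : ℂ)) :
    (b : ℂ) - Complex.I * s + Complex.exp (2 * Complex.I * (a : ℂ) * s) / (2 * (a : ℂ)) ≠ 0 := by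
  split_ifs at hs <;> subst hs
  · exact sub_I_mul_add_exp_div_ne_zero_of_nonneg ha hb (Real.sqrt_nonneg _)
  · exact sub_I_mul_add_exp_div_ne_zero_of_imaginary ha hb (Real.sqrt_nonneg _)
end

section
/- Let a > 0 and b > 0 be real. Then there exists y > 0 with b·y = 1 − e^{−2ay} if and only if b < 2a; moreover, when b < 2a such a y is unique. (This characterizes the existence of a single negative eigenvalue for the delta-perturbed Laplacian on the half line at distance a from the Dirichlet boundary.) -/
/-!
The function `g y = 1 - e^{-2ay}` is strictly concave with `g 0 = 0`, `g' 0 = 2a` and `g ≤ 1`.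
Hence its secant slope `g y / y` decreases strictly on `(0, ∞)`, from `2a` near `0` to `0` at
infinity, and `b y = g y` says exactly that this slope equals `b`.
-/

open Real Set Filter Topology

theorem StrictConcaveOn.strictAntiOn_slope {𝕜 : Type*} [Field 𝕜] [LinearOrder 𝕜]
    [IsStrictOrderedRing 𝕜] {s : Set 𝕜} {f : 𝕜 → 𝕜} {x : 𝕜} (hf : StrictConcaveOn 𝕜 s f)
    (hx : x ∈ s) : StrictAntiOn (slope f x) {y ∈ s | x < y} := by
  intro y hy z hz hyz
  simpa only [slope_def_field] using
    hf.secant_strict_mono hx hy.1 hz.1 hy.2.ne' hz.2.ne' hyz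

theorem HasDerivWithinAt.eventually_lt_slope {f : ℝ → ℝ} {f' x b : ℝ}
    (hf : HasDerivWithinAt f f' (Ioi x) x) (hb : b < f') : ∀ᶠ y in 𝓝[>] x, b < slope f x y :=
  ((hasDerivWithinAt_iff_tendsto_slope' self_notMem_Ioi).1 hf).eventually (lt_mem_nhds hb)

theorem strictConcaveOn_one_sub_exp_neg_mul {c : ℝ} (hc : c ≠ 0) :
    StrictConcaveOn ℝ univ (fun y => 1 - exp (-(c * y))) := by
  refine (concaveOn_const 1 convex_univ).sub_strictConvexOn ⟨convex_univ, ?_⟩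
  intro x _ y _ hxy s t hs ht hst
  have hne : -(c * x) ≠ -(c * y) := by simpa [hc] using hxy
  convert strictConvexOn_exp.2 (mem_univ _) (mem_univ _) hne hs ht hst using 2
  simp only [smul_eq_mul]
  ring

theorem hasDerivAt_one_sub_exp_neg_mul_zero (c : ℝ) :
    HasDerivAt (fun y => 1 - exp (-(c * y))) c 0 := by
  simpa using (((hasDerivAt_id (0 : ℝ)).const_mul c).neg.exp).const_sub 1

section SecantSlope

variable {g : ℝ → ℝ} {b c : ℝ}

theorem mul_eq_iff_slope_zero_eq (hg0 : g 0 = 0) {y : ℝ} (hy : y ≠ 0) :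
    b * y = g y ↔ slope g 0 y = b := by
  rw [slope_def_field, hg0, sub_zero, sub_zero, div_eq_iff hy, eq_comm]

theorem StrictConcaveOn.lt_of_pos_of_mul_eq (hg : StrictConcaveOn ℝ (Ici 0) g) (hg0 : g 0 = 0)
    (hc : HasDerivWithinAt g c (Ici 0) 0) {y : ℝ} (hy : 0 < y) (h : b * y = g y) : b < c := by
  rw [mul_eq_iff_slope_zero_eq hg0 hy.ne'] at h
  exact h ▸ hg.slope_lt_of_hasDerivWithinAt self_mem_Ici hy.le hy hc

theorem StrictConcaveOn.eq_of_pos_of_mul_eq (hg : StrictConcaveOn ℝ (Ici 0) g) (hg0 : g 0 = 0)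
    {y z : ℝ} (hy : 0 < y) (hz : 0 < z) (hby : b * y = g y) (hbz : b * z = g z) : y = z := by
  rw [mul_eq_iff_slope_zero_eq hg0 hy.ne'] at hby
  rw [mul_eq_iff_slope_zero_eq hg0 hz.ne'] at hbz
  exact (hg.strictAntiOn_slope self_mem_Ici).injOn ⟨hy.le, hy⟩ ⟨hz.le, hz⟩ (hby.trans hbz.symm)

theorem exists_pos_mul_eq_of_lt (hcont : ContinuousOn g (Ici 0)) (hg0 : g 0 = 0)
    (hc : HasDerivWithinAt g c (Ici 0) 0) {M : ℝ} (hM : ∀ y, g y ≤ M) (hb : 0 < b)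
    (hbc : b < c) : ∃ y, 0 < y ∧ b * y = g y := by
  obtain ⟨y₁, hslope, hy₁ : 0 < y₁⟩ :=
    ((hc.mono Ioi_subset_Ici_self).eventually_lt_slope hbc).and self_mem_nhdsWithin |>.exists
  rw [slope_def_field, hg0, sub_zero, sub_zero, lt_div_iff₀ hy₁] at hslope
  set y₂ := max y₁ (M / b)
  have hy₁₂ : y₁ ≤ y₂ := le_max_left _ _
  have hy₂ : g y₂ ≤ b * y₂ :=
    (hM y₂).trans ((div_le_iff₀' hb).1 (le_max_right _ _))
  have hcont' : ContinuousOn (fun y => g y - b * y) (Icc y₁ y₂) :=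
    (hcont.mono fun y hy => hy₁.le.trans hy.1).sub (continuousOn_const.mul continuousOn_id)
  obtain ⟨y, hy, hy0⟩ :=
    intermediate_value_Icc' hy₁₂ hcont' ⟨sub_nonpos.2 hy₂, (sub_pos.2 hslope).le⟩
  exact ⟨y, hy₁.trans_le hy.1, (sub_eq_zero.1 hy0).symm⟩

theorem StrictConcaveOn.exists_pos_mul_eq_iff (hg : StrictConcaveOn ℝ (Ici 0) g)
    (hcont : ContinuousOn g (Ici 0)) (hg0 : g 0 = 0) (hc : HasDerivWithinAt g c (Ici 0) 0)
    {M : ℝ} (hM : ∀ y, g y ≤ M) (hb : 0 < b) :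
    ((∃ y, 0 < y ∧ b * y = g y) ↔ b < c) ∧ (b < c → ∃! y, 0 < y ∧ b * y = g y) := by
  have hexists := fun hbc => exists_pos_mul_eq_of_lt hcont hg0 hc hM hb hbc
  refine ⟨⟨fun ⟨y, hy, h⟩ => hg.lt_of_pos_of_mul_eq hg0 hc hy h, hexists⟩, fun hbc => ?_⟩
  obtain ⟨y, hy, h⟩ := hexists hbc
  exact ⟨y, ⟨hy, h⟩, fun z ⟨hz, h'⟩ => hg.eq_of_pos_of_mul_eq hg0 hz hy h' h⟩

end SecantSlope

/-- For real `a > 0`, `b > 0`: there exists `y > 0` with `b·y = 1 − e^{−2ay}` if and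
only if `b < 2a`; moreover, when `b < 2a`, such a `y` is unique. -/
theorem stmt14 (a b : ℝ) (ha : 0 < a) (hb : 0 < b) :
    ((∃ y : ℝ, 0 < y ∧ b * y = 1 - Real.exp (-(2 * a * y))) ↔ b < 2 * a) ∧
    (b < 2 * a → ∃! y : ℝ, 0 < y ∧ b * y = 1 - Real.exp (-(2 * a * y))) :=
  ((strictConcaveOn_one_sub_exp_neg_mul (by positivity)).subset (subset_univ _)
    (convex_Ici 0)).exists_pos_mul_eq_iff (by fun_prop) (by simp)
    (hasDerivAt_one_sub_exp_neg_mul_zero (2 * a)).hasDerivWithinAt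
    (fun y => sub_le_self 1 (exp_pos _).le) hb
end

section
/- Let a > 0, b > 0, v > 0 be real, set D(w) = b − i w + e^{2iaw}/(2a) and r(w) = (1 − e^{2iaw}) / ( i w D(w) ) for complex w. Then D(v) ≠ 0 and D(−v) ≠ 0, and (v/(π i)) ( r(−v) − r(v) ) = −(4a/π) · (1 − 2ab + 2ab·cos(2av) − 2av·sin(2av) − cos(2av)) / (1 + 4a²(b² + v²) + 4ab·cos(2av) − 4av·sin(2av)). (The left side is the boundary-value jump across the continuous spectrum of the trace of the resolvent difference for the delta-perturbed Laplacian on the half space ℍ³, and the right side is the relative spectral measure e(v; −Δ^{g_R}, −Δ⁰) with b = 2/(π² g_R).) -/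
/-!
For real `x`, `exp (2 * I * a * (-x))` is the conjugate of `exp (2 * I * a * x)`, so `D (-x)` and
`r (-x)` are the complex conjugates of `D x` and `r x`, and the jump `r (-v) - r v` equals
`-2 i Im (r v)`. With `exp (2 * I * a * v) = cos (2av) + i sin (2av)` one has
`Im (D v) = sin (2av) / (2a) - v < 0` because `sin t < t` for `t > 0`, and `Im (r v)` is an explicit
quotient whose denominator is `|2a D v|²`; simplifying it only needs `sin² + cos² = 1`.
-/

open Complex ComplexConjugate

noncomputable def deltaDenom (a b : ℝ) (w : ℂ) : ℂ :=
  b - I * w + exp (2 * I * a * w) / (2 * a)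

noncomputable def traceResolvent (a b : ℝ) (w : ℂ) : ℂ :=
  (1 - exp (2 * I * a * w)) / (I * w * deltaDenom a b w)

lemma exp_two_mul_I_mul_ofReal (a x : ℝ) :
    exp (2 * I * a * x) = ⟨Real.cos (2 * a * x), Real.sin (2 * a * x)⟩ := by
  rw [mk_eq_add_mul_I, show 2 * I * a * x = ((2 * a * x : ℝ) : ℂ) * I by push_cast; ring,
    exp_mul_I, ← ofReal_cos, ← ofReal_sin]

lemma conj_exp_two_mul_I_mul_ofReal (a x : ℝ) :
    conj (exp (2 * I * a * x)) = exp (2 * I * a * (-x : ℂ)) := by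
  rw [← exp_conj]; simp [map_ofNat]

lemma deltaDenom_neg_ofReal (a b x : ℝ) : deltaDenom a b (-x) = conj (deltaDenom a b x) := by
  simp [deltaDenom, conj_exp_two_mul_I_mul_ofReal, map_ofNat]

lemma traceResolvent_neg_ofReal (a b x : ℝ) :
    traceResolvent a b (-x) = conj (traceResolvent a b x) := by
  simp [traceResolvent, deltaDenom_neg_ofReal, conj_exp_two_mul_I_mul_ofReal]

lemma deltaDenom_ofReal (a b x : ℝ) : deltaDenom a b x =
    ⟨b + Real.cos (2 * a * x) / (2 * a), Real.sin (2 * a * x) / (2 * a) - x⟩ := by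
  rw [deltaDenom, exp_two_mul_I_mul_ofReal, mk_eq_add_mul_I, mk_eq_add_mul_I]; push_cast; ring

lemma deltaDenom_ne_zero {a x : ℝ} (b : ℝ) (ha : 0 < a) (hx : 0 < x) : deltaDenom a b x ≠ 0 := by
  have hsin := Real.sin_lt (by positivity : 0 < 2 * a * x)
  have him : (deltaDenom a b x).im < 0 := by
    rw [deltaDenom_ofReal, sub_neg, div_lt_iff₀ (by positivity), mul_comm x]
    linarith
  exact fun h => him.ne (by rw [h, zero_im])

lemma normSq_deltaDenom {a : ℝ} (b x : ℝ) (ha : a ≠ 0) :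
    4 * a ^ 2 * normSq (deltaDenom a b x) = 1 + 4 * a ^ 2 * (b ^ 2 + x ^ 2)
      + 4 * a * b * Real.cos (2 * a * x) - 4 * a * x * Real.sin (2 * a * x) := by
  rw [deltaDenom_ofReal, normSq_mk]
  set c := Real.cos (2 * a * x)
  set s := Real.sin (2 * a * x)
  field_simp
  linear_combination 4 * Real.sin_sq_add_cos_sq (2 * a * x)

lemma traceResolvent_im {a x : ℝ} (b : ℝ) (ha : a ≠ 0) (hx : x ≠ 0)
    (hD : deltaDenom a b x ≠ 0) : (traceResolvent a b x).im =
      2 * a * (1 - 2 * a * b + 2 * a * b * Real.cos (2 * a * x)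
        - 2 * a * x * Real.sin (2 * a * x) - Real.cos (2 * a * x))
      / (x * (1 + 4 * a ^ 2 * (b ^ 2 + x ^ 2)
        + 4 * a * b * Real.cos (2 * a * x) - 4 * a * x * Real.sin (2 * a * x))) := by
  rw [← normSq_deltaDenom b x ha, traceResolvent, div_im, normSq_mul, normSq_mul, normSq_I,
    normSq_ofReal]
  have hN := (normSq_pos.2 hD).ne'
  set N := normSq (deltaDenom a b x)
  simp only [mul_re, mul_im, I_re, I_im, ofReal_re, ofReal_im, sub_re, sub_im, one_re, one_im,
    deltaDenom_ofReal, exp_two_mul_I_mul_ofReal]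
  set c := Real.cos (2 * a * x)
  set s := Real.sin (2 * a * x)
  field_simp
  linear_combination 4 * x * Real.sin_sq_add_cos_sq (2 * a * x)

theorem stmt17_general (a b v : ℝ) (ha : 0 < a) (hv : 0 < v)
    (D r : ℂ → ℂ)
    (hD : ∀ w : ℂ, D w = (b : ℂ) - Complex.I * w
      + Complex.exp (2 * Complex.I * (a : ℂ) * w) / (2 * (a : ℂ)))
    (hr : ∀ w : ℂ, r w = (1 - Complex.exp (2 * Complex.I * (a : ℂ) * w))
      / (Complex.I * w * D w)) :
    D (v : ℂ) ≠ 0 ∧ D (-(v : ℂ)) ≠ 0 ∧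
    ((v : ℂ) / ((Real.pi : ℂ) * Complex.I)) * (r (-(v : ℂ)) - r (v : ℂ))
      = -(4 * (a : ℂ) / (Real.pi : ℂ)) *
          (((1 : ℂ) - 2 * a * b + 2 * (a : ℂ) * (b : ℂ) * (Real.cos (2 * a * v) : ℂ)
              - 2 * (a : ℂ) * (v : ℂ) * (Real.sin (2 * a * v) : ℂ)
              - (Real.cos (2 * a * v) : ℂ))
            / ((1 : ℂ) + 4 * (a : ℂ) ^ 2 * ((b : ℂ) ^ 2 + (v : ℂ) ^ 2)
              + 4 * (a : ℂ) * (b : ℂ) * (Real.cos (2 * a * v) : ℂ)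
              - 4 * (a : ℂ) * (v : ℂ) * (Real.sin (2 * a * v) : ℂ))) := by
  obtain rfl : D = deltaDenom a b := funext hD
  obtain rfl : r = traceResolvent a b := funext hr
  have hDv := deltaDenom_ne_zero b ha hv
  refine ⟨hDv, by rwa [deltaDenom_neg_ofReal, map_ne_zero], ?_⟩
  have hQ : 1 + 4 * a ^ 2 * (b ^ 2 + v ^ 2) + 4 * a * b * Real.cos (2 * a * v)
      - 4 * a * v * Real.sin (2 * a * v) ≠ 0 := by
    rw [← normSq_deltaDenom b v ha.ne']
    exact mul_ne_zero (by positivity) (normSq_pos.2 hDv).ne'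
  rw [traceResolvent_neg_ofReal, ← neg_sub, sub_conj, traceResolvent_im b ha.ne' hv.ne' hDv]
  -- otherwise `push_cast` turns `↑(Real.cos t)` into `Complex.cos ↑t`
  generalize Real.cos (2 * a * v) = c, Real.sin (2 * a * v) = s at hQ ⊢
  have hpi : (Real.pi : ℂ) ≠ 0 := ofReal_ne_zero.2 Real.pi_ne_zero
  have hQ' := ofReal_ne_zero.2 hQ
  have hv' := ofReal_ne_zero.2 hv.ne'
  push_cast at hQ' ⊢
  field_simp
  ring

/-- Relative spectral measure for the delta-perturbed Laplacian on the half space `ℍ³`: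
with `D(w) = b − iw + e^{2iaw}/(2a)` and `r(w) = (1 − e^{2iaw})/(i w D(w))`, for real
`a, b, v > 0` one has `D(v) ≠ 0`, `D(−v) ≠ 0`, and
`(v/(πi))(r(−v) − r(v)) = −(4a/π) (1 − 2ab + 2ab cos(2av) − 2av sin(2av) − cos(2av)) /
(1 + 4a²(b²+v²) + 4ab cos(2av) − 4av sin(2av))`. -/
theorem stmt17 (a b v : ℝ) (ha : 0 < a) (hb : 0 < b) (hv : 0 < v)
    (D r : ℂ → ℂ)
    (hD : ∀ w : ℂ, D w = (b : ℂ) - Complex.I * w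
      + Complex.exp (2 * Complex.I * (a : ℂ) * w) / (2 * (a : ℂ)))
    (hr : ∀ w : ℂ, r w = (1 - Complex.exp (2 * Complex.I * (a : ℂ) * w))
      / (Complex.I * w * D w)) :
    D (v : ℂ) ≠ 0 ∧ D (-(v : ℂ)) ≠ 0 ∧
    ((v : ℂ) / ((Real.pi : ℂ) * Complex.I)) * (r (-(v : ℂ)) - r (v : ℂ))
      = -(4 * (a : ℂ) / (Real.pi : ℂ)) *
          (((1 : ℂ) - 2 * a * b + 2 * (a : ℂ) * (b : ℂ) * (Real.cos (2 * a * v) : ℂ)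
              - 2 * (a : ℂ) * (v : ℂ) * (Real.sin (2 * a * v) : ℂ)
              - (Real.cos (2 * a * v) : ℂ))
            / ((1 : ℂ) + 4 * (a : ℂ) ^ 2 * ((b : ℂ) ^ 2 + (v : ℂ) ^ 2)
              + 4 * (a : ℂ) * (b : ℂ) * (Real.cos (2 * a * v) : ℂ)
              - 4 * (a : ℂ) * (v : ℂ) * (Real.sin (2 * a * v) : ℂ))) :=
  stmt17_general a b v ha hv D r hD hr
end
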